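/- arXiv:2603.04274 — 2 statements merged into one kernel-verified Lean document; each statement's English description precedes it below -/
import Mathlib

section
/- Suppose a_1, a_2, a_3, a_4 are real numbers with a_k ∈ {0,1} (where a_k plays the role of Σ_{d|c_k} μ(d)), and for each k let L_k, U_k be real numbers with L_k ≤ a_k ≤ U_k and U_k ≥ 0. Then Π_{k=1}^4 a_k ≥ Σ_{k=1}^4 L_k Π_{j≠k} U_j − 3 Π_{k=1}^4 U_k. -/
open Finset

set_option maxHeartbeats 2000000 in

theorem stmt_4 (a L U : Fin 4 → ℝ)
    (ha : ∀ k, a k = 0 ∨ a k = 1)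
    (hL : ∀ k, L k ≤ a k) (hU : ∀ k, a k ≤ U k) (hU0 : ∀ k, 0 ≤ U k) :
    ∑ k, L k * ∏ j ∈ univ.erase k, U j - 3 * ∏ k, U k ≤ ∏ k, a k := by
  have e0 : (univ.erase (0:Fin 4)) = {1,2,3} := by decide
  have e1 : (univ.erase (1:Fin 4)) = {0,2,3} := by decide
  have e2 : (univ.erase (2:Fin 4)) = {0,1,3} := by decide
  have e3 : (univ.erase (3:Fin 4)) = {0,1,2} := by decide
  have q0 : ∏ j ∈ ({1,2,3} : Finset (Fin 4)), U j = U 1 * (U 2 * U 3) := by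
    rw [prod_insert (by decide), prod_insert (by decide), prod_singleton]
  have q1 : ∏ j ∈ ({0,2,3} : Finset (Fin 4)), U j = U 0 * (U 2 * U 3) := by
    rw [prod_insert (by decide), prod_insert (by decide), prod_singleton]
  have q2 : ∏ j ∈ ({0,1,3} : Finset (Fin 4)), U j = U 0 * (U 1 * U 3) := by
    rw [prod_insert (by decide), prod_insert (by decide), prod_singleton]
  have q3 : ∏ j ∈ ({0,1,2} : Finset (Fin 4)), U j = U 0 * (U 1 * U 2) := by
    rw [prod_insert (by decide), prod_insert (by decide), prod_singleton]
  simp only [Fin.sum_univ_four, Fin.prod_univ_four, e0, e1, e2, e3, q0, q1, q2, q3]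
  have h0 := hL 0; have h1 := hL 1; have h2 := hL 2; have h3 := hL 3
  have u0 := hU 0; have u1 := hU 1; have u2 := hU 2; have u3 := hU 3
  have v0 := hU0 0; have v1 := hU0 1; have v2 := hU0 2; have v3 := hU0 3
  rcases ha 0 with p0 | p0 <;> rcases ha 1 with p1 | p1 <;>
    rcases ha 2 with p2 | p2 <;> rcases ha 3 with p3 | p3 <;>
    rw [p0] at h0 u0 <;> rw [p1] at h1 u1 <;> rw [p2] at h2 u2 <;> rw [p3] at h3 u3 <;>
    simp only [p0, p1, p2, p3] <;>
    nlinarith [mul_nonneg v0 v1, mul_nonneg v2 v3, mul_nonneg v0 v2, mul_nonneg v0 v3,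
      mul_nonneg v1 v2, mul_nonneg v1 v3,
      mul_nonneg (mul_nonneg v0 v1) v2, mul_nonneg (mul_nonneg v0 v1) v3,
      mul_nonneg (mul_nonneg v0 v2) v3, mul_nonneg (mul_nonneg v1 v2) v3,
      mul_nonneg (mul_nonneg (mul_nonneg v0 v1) v2) v3,
      mul_nonneg (sub_nonneg.2 u0) (sub_nonneg.2 u1),
      mul_nonneg (sub_nonneg.2 u0) (sub_nonneg.2 u2),
      mul_nonneg (sub_nonneg.2 u0) (sub_nonneg.2 u3),
      mul_nonneg (sub_nonneg.2 u1) (sub_nonneg.2 u2),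
      mul_nonneg (sub_nonneg.2 u1) (sub_nonneg.2 u3),
      mul_nonneg (sub_nonneg.2 u2) (sub_nonneg.2 u3),
      mul_nonneg (mul_nonneg (sub_nonneg.2 u0) (sub_nonneg.2 u1)) (sub_nonneg.2 u2),
      mul_nonneg (mul_nonneg (sub_nonneg.2 u0) (sub_nonneg.2 u1)) (sub_nonneg.2 u3),
      mul_nonneg (mul_nonneg (sub_nonneg.2 u0) (sub_nonneg.2 u2)) (sub_nonneg.2 u3),
      mul_nonneg (mul_nonneg (sub_nonneg.2 u1) (sub_nonneg.2 u2)) (sub_nonneg.2 u3),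
      mul_nonneg (mul_nonneg (mul_nonneg (sub_nonneg.2 u0) (sub_nonneg.2 u1)) (sub_nonneg.2 u2)) (sub_nonneg.2 u3)]
end

section
/- For all real x ≥ 2, Π_{p ≤ x, p prime} (1 − 1/p) ≥ c/log x for some absolute constant c > 0; consequently, for every ε > 0 and all integers h ≥ 2, Π_{p | h} (1 − 1/p) ≥ Π_{p ≤ h} (1 − 1/p) ≫_ε h^{−ε}. -/
/-!
Chebyshev's bound `θ(N) ≤ N log 4` together with Legendre's formula for `log N!` gives Mertens'
first estimate `∑_{p ≤ N} log p / p ≤ log N + log 4`. Partial summation against `1 / log`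
turns it into `∑_{p ≤ N} 1 / p ≤ log log N + 3 - log log 2`. Since
`log (1 - 1/p) ≥ -1/p - (1/(p-1) - 1/p)` and the last terms telescope to at most `1`,
`∏_{p ≤ N} (1 - 1/p) ≥ log 2 / (e⁴ log N)`. The primes dividing `h` are among those `≤ h`, and
`log h ≤ h^ε / ε` gives the second bound.
-/

open Finset Real

lemma sum_primesLE_div_mul_log_le_log_factorial (N : ℕ) :
    ∑ p ∈ Nat.primesLE N, ((N / p : ℕ) : ℝ) * log p ≤ log N.factorial := by
  rw [log_nat_eq_sum_factorization, Finsupp.sum, Nat.support_factorization]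
  have hsub : Nat.primesLE N ⊆ N.factorial.primeFactors := fun p hp => by
    obtain ⟨hpN, hp⟩ := Nat.mem_primesLE.1 hp
    exact Nat.mem_primeFactors.2 ⟨hp, hp.dvd_factorial.2 hpN, N.factorial_ne_zero⟩
  refine (sum_le_sum fun p hp => ?_).trans <| sum_le_sum_of_subset_of_nonneg hsub
    fun p hp _ => mul_nonneg (Nat.cast_nonneg _) (log_natCast_nonneg p)
  obtain ⟨hpN, hp⟩ := Nat.mem_primesLE.1 hp
  have hlog : Nat.log p N < N + 1 := (Nat.log_le_self p N).trans_lt N.lt_succ_self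
  have : N / p ≤ N.factorial.factorization p := by
    rw [Nat.factorization_factorial hp hlog]
    calc N / p = N / p ^ 1 := by rw [pow_one]
      _ ≤ ∑ i ∈ Ico 1 (N + 1), N / p ^ i :=
        single_le_sum (f := fun i => N / p ^ i) (fun _ _ => Nat.zero_le _)
          (mem_Ico.2 ⟨le_rfl, by have := hp.two_le; omega⟩)
  gcongr

lemma sum_primesLE_log_div_le (N : ℕ) :
    ∑ p ∈ Nat.primesLE N, log p / p ≤ log N + log 4 := by
  rcases N.eq_zero_or_pos with rfl | hN
  · simpa using log_nonneg (by norm_num : (1 : ℝ) ≤ 4)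
  have hN' : (0 : ℝ) < N := by exact_mod_cast hN
  rw [← mul_le_mul_iff_right₀ hN', mul_sum]
  calc ∑ p ∈ Nat.primesLE N, (N : ℝ) * (log p / p)
      ≤ ∑ p ∈ Nat.primesLE N, (((N / p : ℕ) : ℝ) + 1) * log p := by
        refine sum_le_sum fun p _ => ?_
        rw [← mul_div_assoc, mul_div_right_comm]
        gcongr
        rw [← Nat.floor_div_eq_div (K := ℝ)]
        exact (Nat.lt_floor_add_one _).le
    _ = ∑ p ∈ Nat.primesLE N, ((N / p : ℕ) : ℝ) * log p + ∑ p ∈ Nat.primesLE N, log p := by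
        simp only [add_mul, one_mul, sum_add_distrib]
    _ ≤ log N.factorial + log 4 * N := by
        gcongr
        · exact sum_primesLE_div_mul_log_le_log_factorial N
        · rw [← Chebyshev.theta_eq_sum_primesLE_log]
          exact Chebyshev.theta_le_log4_mul_x N.cast_nonneg
    _ ≤ N * log N + log 4 * N := by
        gcongr
        rw [← log_pow]
        exact log_le_log (by positivity) (by exact_mod_cast N.factorial_le_pow)
    _ = N * (log N + log 4) := by ring

/-- With `u = log N`, `v = log (N + 1)`: one step of partial summation against `1 / log` is bounded
by the increment of `log (log t) - a / log t`. -/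
lemma inv_sub_inv_mul_add_le {u v : ℝ} (hu : 0 < u) (hv : 0 < v) (a : ℝ) :
    (u⁻¹ - v⁻¹) * (u + a) ≤ log v - log u + (a / u - a / v) := by
  have h := one_sub_inv_le_log_of_pos (div_pos hv hu)
  rw [log_div hv.ne' hu.ne', inv_div] at h
  have expand : (u⁻¹ - v⁻¹) * (u + a) = 1 - u / v + (a / u - a / v) := by
    field_simp
  linarith

/-- Partial summation by induction on `N`: a new prime `N + 1` contributes `0`, and replacing
`log N` by `log (N + 1)` adds `(1 / log N - 1 / log (N + 1)) * ∑_{p ≤ N} log p / p`. -/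
lemma sum_primesLE_inv_sub_log_div_le {N : ℕ} (hN : 2 ≤ N) :
    ∑ p ∈ Nat.primesLE N, ((p : ℝ)⁻¹ - log p / p / log N) ≤
      log (log N) - log (log 2) + (log 4 / log 2 - log 4 / log N) := by
  induction N, hN using Nat.le_induction with
  | base =>
    have : Nat.primesLE 2 = {2} := by decide
    rw [this, sum_singleton]
    field_simp
    simp
  | succ N hN ih =>
    set L := log (N : ℝ)
    set L' := log ((N + 1 : ℕ) : ℝ)
    have hL : 0 < L := log_pos (by exact_mod_cast hN)
    have hLL' : L ≤ L' := log_le_log (by positivity) (by simp)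
    have hL' : 0 < L' := hL.trans_le hLL'
    have hnew : ∑ p ∈ Nat.primesLE (N + 1), ((p : ℝ)⁻¹ - log p / p / L') =
        ∑ p ∈ Nat.primesLE N, ((p : ℝ)⁻¹ - log p / p / L') := by
      rw [Nat.primesLE_succ]
      split_ifs
      · rw [sum_insert (Nat.notMem_primesLE N)]
        field_simp
        ring
      · rfl
    have hsplit : ∑ p ∈ Nat.primesLE N, ((p : ℝ)⁻¹ - log p / p / L') =
        ∑ p ∈ Nat.primesLE N, ((p : ℝ)⁻¹ - log p / p / L) +
          (L⁻¹ - L'⁻¹) * ∑ p ∈ Nat.primesLE N, log p / p := by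
      rw [mul_sum, ← sum_add_distrib]
      exact sum_congr rfl fun p _ => by ring
    have hdecr : 0 ≤ L⁻¹ - L'⁻¹ := sub_nonneg.2 (inv_anti₀ hL hLL')
    rw [hnew, hsplit]
    calc _ ≤ log L - log (log 2) + (log 4 / log 2 - log 4 / L) +
          (L⁻¹ - L'⁻¹) * (L + log 4) := by
          gcongr
          exact sum_primesLE_log_div_le N
      _ ≤ log L - log (log 2) + (log 4 / log 2 - log 4 / L) +
          (log L' - log L + (log 4 / L - log 4 / L')) := by
          gcongr
          exact inv_sub_inv_mul_add_le hL hL' _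
      _ = _ := by ring

lemma sum_primesLE_inv_le {N : ℕ} (hN : 2 ≤ N) :
    ∑ p ∈ Nat.primesLE N, (p : ℝ)⁻¹ ≤ log (log N) + 3 - log (log 2) := by
  have hL : 0 < log (N : ℝ) := log_pos (by exact_mod_cast hN)
  have hlog4 : log 4 / log 2 = 2 := by
    rw [show (4 : ℝ) = 2 ^ 2 by norm_num, log_pow]
    push_cast
    field_simp
  have hsplit : ∑ p ∈ Nat.primesLE N, (p : ℝ)⁻¹ =
      ∑ p ∈ Nat.primesLE N, ((p : ℝ)⁻¹ - log p / p / log N) +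
        (∑ p ∈ Nat.primesLE N, log p / p) / log N := by
    rw [sum_div, ← sum_add_distrib]
    exact sum_congr rfl fun p _ => by ring
  have hmain : (∑ p ∈ Nat.primesLE N, log p / p) / log N ≤ 1 + log 4 / log N := by
    rw [div_le_iff₀ hL, add_mul, one_mul, div_mul_cancel₀ _ hL.ne']
    linarith [sum_primesLE_log_div_le N]
  rw [hsplit]
  linarith [sum_primesLE_inv_sub_log_div_le hN]

lemma neg_inv_sub_one_le_log_one_sub_inv {x : ℝ} (hx : 1 < x) :
    -(x - 1)⁻¹ ≤ log (1 - x⁻¹) := by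
  have hpos : 0 < 1 - x⁻¹ := sub_pos.2 (inv_lt_one_of_one_lt₀ hx)
  have h := one_sub_inv_le_log_of_pos hpos
  have hx0 : x ≠ 0 := by positivity
  have hx1 : x - 1 ≠ 0 := sub_ne_zero.2 hx.ne'
  convert h using 1
  field_simp
  ring

lemma sum_inv_sub_one_sub_inv_le_one {s : Finset ℕ} (hs : ∀ n ∈ s, 2 ≤ n) :
    ∑ n ∈ s, (((n : ℝ) - 1)⁻¹ - (n : ℝ)⁻¹) ≤ 1 := by
  obtain ⟨M, hM⟩ := s.exists_nat_subset_range
  have hsub : s ⊆ Ico 2 (M + 2) := fun n hn =>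
    mem_Ico.2 ⟨hs n hn, by have := mem_range.1 (hM hn); omega⟩
  calc ∑ n ∈ s, (((n : ℝ) - 1)⁻¹ - (n : ℝ)⁻¹)
      ≤ ∑ n ∈ Ico 2 (M + 2), (((n : ℝ) - 1)⁻¹ - (n : ℝ)⁻¹) := by
        refine sum_le_sum_of_subset_of_nonneg hsub fun n hn _ => ?_
        have : (2 : ℝ) ≤ n := by exact_mod_cast (mem_Ico.1 hn).1
        exact sub_nonneg.2 (inv_anti₀ (by linarith) (by linarith))
    _ = ∑ n ∈ Ico 2 (M + 2), (-((n + 1 : ℕ) - 1 : ℝ)⁻¹ - -((n : ℝ) - 1)⁻¹) := by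
        push_cast
        exact sum_congr rfl fun n _ => by ring
    _ = 1 - ((M : ℝ) + 1)⁻¹ := by
        rw [sum_Ico_sub (fun n : ℕ => -((n : ℝ) - 1)⁻¹) (by omega)]
        push_cast
        ring
    _ ≤ 1 := sub_le_self 1 (by positivity)

lemma prod_primesLE_one_sub_inv_ge {N : ℕ} (hN : 2 ≤ N) :
    log 2 / exp 4 / log N ≤ ∏ p ∈ Nat.primesLE N, (1 - (p : ℝ)⁻¹) := by
  have hL : 0 < log (N : ℝ) := log_pos (by exact_mod_cast hN)
  have hone : ∀ p ∈ Nat.primesLE N, (1 : ℝ) < p := fun p hp => by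
    exact_mod_cast Nat.one_lt_of_mem_primesLE hp
  have hsum : -(∑ p ∈ Nat.primesLE N, (p : ℝ)⁻¹) - 1 ≤
      ∑ p ∈ Nat.primesLE N, log (1 - (p : ℝ)⁻¹) := by
    calc -(∑ p ∈ Nat.primesLE N, (p : ℝ)⁻¹) - 1
        ≤ -(∑ p ∈ Nat.primesLE N, (p : ℝ)⁻¹) -
            ∑ p ∈ Nat.primesLE N, (((p : ℝ) - 1)⁻¹ - (p : ℝ)⁻¹) := by
          gcongr
          exact sum_inv_sub_one_sub_inv_le_one fun p hp => Nat.two_le_of_mem_primesLE hp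
      _ = ∑ p ∈ Nat.primesLE N, -((p : ℝ) - 1)⁻¹ := by
          rw [← sum_neg_distrib, ← sum_sub_distrib]
          exact sum_congr rfl fun p _ => by ring
      _ ≤ _ := sum_le_sum fun p hp => neg_inv_sub_one_le_log_one_sub_inv (hone p hp)
  calc log 2 / exp 4 / log N = exp (log (log 2) - 4 - log (log N)) := by
        rw [exp_sub, exp_sub, exp_log (log_pos one_lt_two), exp_log hL]
    _ ≤ exp (∑ p ∈ Nat.primesLE N, log (1 - (p : ℝ)⁻¹)) := by
        gcongr
        linarith [sum_primesLE_inv_le hN]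
    _ = ∏ p ∈ Nat.primesLE N, (1 - (p : ℝ)⁻¹) := by
        rw [exp_sum]
        exact prod_congr rfl fun p hp => exp_log (sub_pos.2 (inv_lt_one_of_one_lt₀ (hone p hp)))

lemma prod_primesLE_le_prod_primeFactors (n : ℕ) :
    ∏ p ∈ n.primesLE, (1 - (p : ℝ)⁻¹) ≤ ∏ p ∈ n.primeFactors, (1 - (p : ℝ)⁻¹) := by
  have hsub : n.primeFactors ⊆ n.primesLE := fun p hp =>
    Nat.mem_primesLE.2 ⟨Nat.le_of_mem_primeFactors hp, Nat.prime_of_mem_primeFactors hp⟩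
  refine prod_le_prod_of_subset_of_le_one hsub (fun p hp => ?_) fun _ _ _ => by simp
  have : (1 : ℝ) < p := by exact_mod_cast Nat.one_lt_of_mem_primesLE hp
  exact sub_nonneg.2 (inv_le_one_of_one_le₀ this.le)

lemma mul_rpow_neg_le_inv_log {x ε : ℝ} (hx : 1 < x) (hε : 0 < ε) :
    ε * x ^ (-ε) ≤ (log x)⁻¹ := by
  have hL : 0 < log x := log_pos hx
  have hxε : 0 < x ^ ε := rpow_pos_of_pos (by linarith) ε
  rw [rpow_neg (by linarith), ← div_eq_mul_inv, div_le_iff₀ hxε, inv_mul_eq_div,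
    le_div_iff₀ hL, mul_comm, ← le_div_iff₀ hε]
  exact log_le_rpow_div (by linarith) hε

theorem stmt_19 :
    (∃ c : ℝ, 0 < c ∧ ∀ x : ℝ, 2 ≤ x →
      c / Real.log x ≤ ∏ p ∈ (Finset.range (⌊x⌋₊ + 1)).filter Nat.Prime,
        (1 - 1 / (p : ℝ))) ∧
    (∀ ε : ℝ, 0 < ε → ∃ C : ℝ, 0 < C ∧ ∀ h : ℕ, 2 ≤ h →
      C * (h : ℝ) ^ (-ε) ≤ ∏ p ∈ h.primeFactors, (1 - 1 / (p : ℝ))) := by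
  simp only [one_div, ← Nat.primesLE_eq_filter_range]
  have hc : 0 < log 2 / exp 4 := div_pos (log_pos one_lt_two) (exp_pos 4)
  have hmertens : ∀ x : ℝ, 2 ≤ x →
      log 2 / exp 4 / log x ≤ ∏ p ∈ Nat.primesLE ⌊x⌋₊, (1 - (p : ℝ)⁻¹) := fun x hx => by
    have hN : 2 ≤ ⌊x⌋₊ := Nat.le_floor (by exact_mod_cast hx)
    refine le_trans ?_ (prod_primesLE_one_sub_inv_ge hN)
    gcongr
    · exact log_pos (by exact_mod_cast hN)
    · exact Nat.floor_le (by linarith)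
  refine ⟨⟨_, hc, hmertens⟩, fun ε hε => ⟨log 2 / exp 4 * ε, by positivity, fun h hh => ?_⟩⟩
  have hh' : (2 : ℝ) ≤ h := by exact_mod_cast hh
  calc log 2 / exp 4 * ε * (h : ℝ) ^ (-ε) = log 2 / exp 4 * (ε * (h : ℝ) ^ (-ε)) := by ring
    _ ≤ log 2 / exp 4 / log h := by
        rw [div_eq_mul_inv _ (log _)]
        gcongr
        exact mul_rpow_neg_le_inv_log (by linarith) hε
    _ ≤ ∏ p ∈ Nat.primesLE h, (1 - (p : ℝ)⁻¹) := by simpa using hmertens h hh'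
    _ ≤ _ := prod_primesLE_le_prod_primeFactors h
end
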